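/- Let C be a monoidal category with associator a. Suppose given a contravariant functor D from C to C (a functor from C^op to C), written on objects as X ↦ X* and on morphisms f : X → Y as ᵗf : Y* → X*, together with a natural isomorphism c_{X,Y} : Y* ⊗ X* ≅ (X ⊗ Y)* satisfying the anti-multiplicativity hexagon: for all objects X, Y, Z, ᵗ(a_{Z,Y,X}) ∘ c_{Z, Y⊗X} ∘ (c_{Y,X} ⊗ id_{Z*}) = c_{Z⊗Y, X} ∘ (id_{X*} ⊗ c_{Z,Y}) ∘ a_{X*,Y*,Z*} as morphisms (X* ⊗ Y*) ⊗ Z* → ((Z⊗Y)⊗X)*. Then the covariant double-dual functor X ↦ X**, f ↦ ᵗ(ᵗf), equipped with the maps μ_{X,Y} := ᵗ(c_{X,Y})⁻¹ ∘ c_{Y*,X*} : X** ⊗ Y** → (Y* ⊗ X*)* → (X ⊗ Y)**, is multiplicative as a monoidal functor: each μ_{X,Y} is an isomorphism natural in X and Y, and the associativity coherence holds, i.e. for all X, Y, Z, ᵗᵗ(a_{X,Y,Z}) ∘ μ_{X⊗Y, Z} ∘ (μ_{X,Y} ⊗ id_{Z**}) = μ_{X, Y⊗Z} ∘ (id_{X**}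 ⊗ μ_{Y,Z}) ∘ a_{X**,Y**,Z**}. -/

import Mathlib

/-!
Each identity for `μ X Y = ᵗ(c X Y)⁻¹ ∘ c Y* X*` splits into an identity for `c` at duals and the
transpose of an identity for `c⁻¹`. Naturality of `μ` is naturality of `c` at `(ᵗg, ᵗf)` followed
by the transposed naturality of `c⁻¹`. For associativity, naturality of `c` pushes the transposes
to the right, so that both sides become a composite of components of `c` at `X*, Y*, Z*` followed
by one transpose; the hexagon at `(X*, Y*, Z*)` identifies the first parts, and the transposed
inverse hexagon at `(Z, Y, X)` the second.
-/

open CategoryTheory MonoidalCategory Opposite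

namespace CategoryTheory.Functor

variable {C : Type*} [Category C] [MonoidalCategory C] (D : Cᵒᵖ ⥤ C)
  (c : ∀ X Y : C, D.obj (op Y) ⊗ D.obj (op X) ≅ D.obj (op (X ⊗ Y)))

def doubleDualμ (X Y : C) :
    D.obj (op (D.obj (op X))) ⊗ D.obj (op (D.obj (op Y))) ⟶ D.obj (op (D.obj (op (X ⊗ Y)))) :=
  (c (D.obj (op Y)) (D.obj (op X))).hom ≫ (D.mapIso (c X Y).op).inv

instance isIso_doubleDualμ (X Y : C) : IsIso (doubleDualμ D c X Y) := by
  unfold doubleDualμ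
  infer_instance

lemma map_tensorHom_op_comp_inv
    (hc_nat : ∀ {X X' Y Y' : C} (f : X ⟶ X') (g : Y ⟶ Y'),
      (D.map g.op ⊗ₘ D.map f.op) ≫ (c X Y).hom = (c X' Y').hom ≫ D.map (f ⊗ₘ g).op)
    {X X' Y Y' : C} (f : X ⟶ X') (g : Y ⟶ Y') :
    D.map (f ⊗ₘ g).op ≫ (c X Y).inv = (c X' Y').inv ≫ (D.map g.op ⊗ₘ D.map f.op) := by
  rw [Iso.comp_inv_eq, Category.assoc, hc_nat, Iso.inv_hom_id_assoc]

lemma inv_hexagon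
    (hc_hex : ∀ X Y Z : C,
      ((c Y X).hom ⊗ₘ 𝟙 (D.obj (op Z))) ≫ (c Z (Y ⊗ X)).hom ≫ D.map (α_ Z Y X).hom.op
        = (α_ (D.obj (op X)) (D.obj (op Y)) (D.obj (op Z))).hom
            ≫ (𝟙 (D.obj (op X)) ⊗ₘ (c Z Y).hom) ≫ (c (Z ⊗ Y) X).hom)
    (X Y Z : C) :
    (c X (Y ⊗ Z)).inv ≫ ((c Y Z).inv ⊗ₘ 𝟙 (D.obj (op X))) ≫ (α_ _ _ _).hom
      = D.map (α_ X Y Z).hom.op ≫ (c (X ⊗ Y) Z).inv ≫ (𝟙 (D.obj (op Z)) ⊗ₘ (c X Y).inv) := by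
  rw [← cancel_epi (c X (Y ⊗ Z)).hom, ← cancel_epi ((c Y Z).hom ⊗ₘ 𝟙 (D.obj (op X))),
    reassoc_of% hc_hex Z Y X]
  simp only [Iso.hom_inv_id_assoc, tensorHom_comp_tensorHom_assoc, tensorHom_comp_tensorHom,
    Iso.hom_inv_id, Category.id_comp, Category.comp_id, id_tensorHom_id]

lemma doubleDualμ_naturality
    (hc_nat : ∀ {X X' Y Y' : C} (f : X ⟶ X') (g : Y ⟶ Y'),
      (D.map g.op ⊗ₘ D.map f.op) ≫ (c X Y).hom = (c X' Y').hom ≫ D.map (f ⊗ₘ g).op)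
    {X X' Y Y' : C} (f : X ⟶ X') (g : Y ⟶ Y') :
    (D.map (D.map f.op).op ⊗ₘ D.map (D.map g.op).op) ≫ doubleDualμ D c X' Y'
      = doubleDualμ D c X Y ≫ D.map (D.map (f ⊗ₘ g).op).op := by
  simp only [doubleDualμ, mapIso_inv, Iso.op_inv]
  rw [reassoc_of% hc_nat (D.map g.op) (D.map f.op), Category.assoc, ← D.map_comp, ← D.map_comp,
    ← op_comp, ← op_comp, map_tensorHom_op_comp_inv D c hc_nat]

lemma doubleDualμ_tensor_id_comp_doubleDualμ
    (hc_nat : ∀ {X X' Y Y' : C} (f : X ⟶ X') (g : Y ⟶ Y'),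
      (D.map g.op ⊗ₘ D.map f.op) ≫ (c X Y).hom = (c X' Y').hom ≫ D.map (f ⊗ₘ g).op)
    (X Y Z : C) :
    (doubleDualμ D c X Y ⊗ₘ 𝟙 _) ≫ doubleDualμ D c (X ⊗ Y) Z
      = ((c _ _).hom ⊗ₘ 𝟙 _) ≫ (c _ _).hom
          ≫ D.map ((c (X ⊗ Y) Z).inv ≫ (𝟙 _ ⊗ₘ (c X Y).inv)).op := by
  have h := hc_nat (𝟙 (D.obj (op Z))) (c X Y).inv
  rw [op_id, D.map_id] at h
  simp only [doubleDualμ, mapIso_inv, Iso.op_inv, op_comp, D.map_comp, comp_tensor_id,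
    Category.assoc, reassoc_of% h]

lemma id_tensor_doubleDualμ_comp_doubleDualμ
    (hc_nat : ∀ {X X' Y Y' : C} (f : X ⟶ X') (g : Y ⟶ Y'),
      (D.map g.op ⊗ₘ D.map f.op) ≫ (c X Y).hom = (c X' Y').hom ≫ D.map (f ⊗ₘ g).op)
    (X Y Z : C) :
    (𝟙 _ ⊗ₘ doubleDualμ D c Y Z) ≫ doubleDualμ D c X (Y ⊗ Z)
      = (𝟙 _ ⊗ₘ (c _ _).hom) ≫ (c _ _).hom
          ≫ D.map ((c X (Y ⊗ Z)).inv ≫ ((c Y Z).inv ⊗ₘ 𝟙 _)).op := by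
  have h := hc_nat (c Y Z).inv (𝟙 (D.obj (op X)))
  rw [op_id, D.map_id] at h
  simp only [doubleDualμ, mapIso_inv, Iso.op_inv, op_comp, D.map_comp, id_tensor_comp,
    Category.assoc, reassoc_of% h]

lemma doubleDualμ_assoc
    (hc_nat : ∀ {X X' Y Y' : C} (f : X ⟶ X') (g : Y ⟶ Y'),
      (D.map g.op ⊗ₘ D.map f.op) ≫ (c X Y).hom = (c X' Y').hom ≫ D.map (f ⊗ₘ g).op)
    (hc_hex : ∀ X Y Z : C,
      ((c Y X).hom ⊗ₘ 𝟙 (D.obj (op Z))) ≫ (c Z (Y ⊗ X)).hom ≫ D.map (α_ Z Y X).hom.op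
        = (α_ (D.obj (op X)) (D.obj (op Y)) (D.obj (op Z))).hom
            ≫ (𝟙 (D.obj (op X)) ⊗ₘ (c Z Y).hom) ≫ (c (Z ⊗ Y) X).hom)
    (X Y Z : C) :
    (doubleDualμ D c X Y ⊗ₘ 𝟙 _) ≫ doubleDualμ D c (X ⊗ Y) Z ≫ D.map (D.map (α_ X Y Z).hom.op).op
      = (α_ _ _ _).hom ≫ (𝟙 _ ⊗ₘ doubleDualμ D c Y Z) ≫ doubleDualμ D c X (Y ⊗ Z) := by
  rw [reassoc_of% doubleDualμ_tensor_id_comp_doubleDualμ D c hc_nat,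
    id_tensor_doubleDualμ_comp_doubleDualμ D c hc_nat, ← D.map_comp, ← op_comp,
    ← inv_hexagon D c hc_hex]
  simp only [op_comp, D.map_comp, Category.assoc, reassoc_of% hc_hex]

end CategoryTheory.Functor

/-- Given a monoidal category `C`, a contravariant functor `D : Cᵒᵖ ⥤ C`
(written `X ↦ X*`, `f ↦ ᵗf := D.map f.op`), and a natural family of isomorphisms
`c X Y : Y* ⊗ X* ≅ (X ⊗ Y)*` satisfying the anti-multiplicativity hexagon, the double dual
functor `X ↦ X**`, `f ↦ ᵗᵗf`, equipped with
`μ X Y := ᵗ(c X Y)⁻¹ ∘ c (Y*) (X*) : X** ⊗ Y** ⟶ (X ⊗ Y)**`, is multiplicative as a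
monoidal functor: each `μ X Y` is an isomorphism, `μ` is natural in `X` and `Y`, and the
associativity coherence holds. -/
theorem double_dual_is_multiplicative
    {C : Type*} [Category C] [MonoidalCategory C]
    (D : Cᵒᵖ ⥤ C)
    (c : ∀ X Y : C, D.obj (op Y) ⊗ D.obj (op X) ≅ D.obj (op (X ⊗ Y)))
    (hc_nat : ∀ {X X' Y Y' : C} (f : X ⟶ X') (g : Y ⟶ Y'),
      (D.map g.op ⊗ₘ D.map f.op) ≫ (c X Y).hom
        = (c X' Y').hom ≫ D.map (f ⊗ₘ g).op)
    (hc_hex : ∀ X Y Z : C,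
      ((c Y X).hom ⊗ₘ 𝟙 (D.obj (op Z))) ≫ (c Z (Y ⊗ X)).hom ≫ D.map (α_ Z Y X).hom.op
        = (α_ (D.obj (op X)) (D.obj (op Y)) (D.obj (op Z))).hom
            ≫ (𝟙 (D.obj (op X)) ⊗ₘ (c Z Y).hom) ≫ (c (Z ⊗ Y) X).hom) :
    -- the dual and double dual of objects and morphisms
    let star : C → C := fun X => D.obj (op X)
    let dstar : ∀ {X Y : C}, (X ⟶ Y) → (star (star X) ⟶ star (star Y)) :=
      fun f => D.map (D.map f.op).op
    -- the multiplicativity morphisms μ_{X,Y} = ᵗ(c_{X,Y})⁻¹ ∘ c_{Y*,X*}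
    let μ : ∀ X Y : C, star (star X) ⊗ star (star Y) ⟶ star (star (X ⊗ Y)) :=
      fun X Y => (c (star Y) (star X)).hom ≫ (D.mapIso (c X Y).op).inv
    -- each μ_{X,Y} is an isomorphism
    (∀ X Y : C, IsIso (μ X Y)) ∧
    -- μ is natural in X and Y
    (∀ {X X' Y Y' : C} (f : X ⟶ X') (g : Y ⟶ Y'),
      (dstar f ⊗ₘ dstar g) ≫ μ X' Y' = μ X Y ≫ dstar (f ⊗ₘ g)) ∧
    -- associativity coherence of the double dual functor
    (∀ X Y Z : C,
      (μ X Y ⊗ₘ 𝟙 (star (star Z))) ≫ μ (X ⊗ Y) Z ≫ dstar (α_ X Y Z).hom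
        = (α_ (star (star X)) (star (star Y)) (star (star Z))).hom
            ≫ (𝟙 (star (star X)) ⊗ₘ μ Y Z) ≫ μ X (Y ⊗ Z)) :=
  ⟨D.isIso_doubleDualμ c, D.doubleDualμ_naturality c hc_nat, D.doubleDualμ_assoc c hc_nat hc_hex⟩
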